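/- arXiv:math/0009110 — 4 statements merged into one kernel-verified Lean document; each statement's English description precedes it below -/
import Mathlib

section
/- Let Z(φ) = Σ_{k≥0} φ^k / g(k)! be a power series with positive coefficients (g(k)! := g(1)···g(k), g(0)! := 1, with g(k) > 0 for k ≥ 1), with radius of convergence φ* > 0. Then the function M(φ) = φ · d/dφ (log Z(φ)) is strictly increasing and continuous on (0, φ*). -/
private lemma aux_pow_cross {x y : ℝ} (hx : 0 ≤ x) (hxy : x ≤ y) {j k : ℕ} (hjk : j ≤ k) :
    x ^ k * y ^ j ≤ x ^ j * y ^ k := by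
  have hy : 0 ≤ y := hx.trans hxy
  have h1 : x ^ k = x ^ j * x ^ (k - j) := by rw [← pow_add, Nat.add_sub_cancel' hjk]
  have h2 : y ^ k = y ^ j * y ^ (k - j) := by rw [← pow_add, Nat.add_sub_cancel' hjk]
  rw [h1, h2]
  have h3 : x ^ (k - j) ≤ y ^ (k - j) := pow_le_pow_left₀ hx hxy _
  have h4 : 0 ≤ x ^ j := pow_nonneg hx j
  have h5 : 0 ≤ y ^ j := pow_nonneg hy j
  nlinarith [mul_le_mul_of_nonneg_left h3 (mul_nonneg h4 h5)]

private lemma aux_sign {x y : ℝ} (hx : 0 ≤ x) (hxy : x ≤ y) (j k : ℕ) :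
    0 ≤ ((j : ℝ) - (k : ℝ)) * (y ^ j * x ^ k - x ^ j * y ^ k) := by
  rcases le_total j k with h | h
  · have h1 : ((j : ℝ) - (k : ℝ)) ≤ 0 := by
      have := (Nat.cast_le (α := ℝ)).mpr h; linarith
    have h2 : y ^ j * x ^ k - x ^ j * y ^ k ≤ 0 := by
      have := aux_pow_cross hx hxy h; nlinarith
    nlinarith [mul_nonneg (neg_nonneg.2 h1) (neg_nonneg.2 h2)]
  · have h1 : 0 ≤ ((j : ℝ) - (k : ℝ)) := by
      have := (Nat.cast_le (α := ℝ)).mpr h; linarith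
    have h2 : 0 ≤ y ^ j * x ^ k - x ^ j * y ^ k := by
      have := aux_pow_cross hx hxy h; nlinarith
    exact mul_nonneg h1 h2

private lemma aux_summable {c : ℕ → ℝ} (hc : ∀ n, 0 ≤ c n) (m : ℕ) {x R : ℝ}
    (hx : 0 ≤ x) (hxR : x < R) (h : Summable fun n : ℕ => c n * R ^ n) :
    Summable fun n : ℕ => (n : ℝ) ^ m * c n * x ^ n := by
  have hR : 0 < R := hx.trans_lt hxR
  set q : ℝ := x / R with hq
  have hq0 : 0 ≤ q := div_nonneg hx hR.le
  have hq1 : q < 1 := (div_lt_one hR).2 hxR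
  have hgeo : Summable fun n : ℕ => (n : ℝ) ^ m * q ^ n :=
    summable_pow_mul_geometric_of_norm_lt_one m (by rwa [Real.norm_eq_abs, abs_of_nonneg hq0])
  have hev : ∀ᶠ n : ℕ in Filter.atTop, (n : ℝ) ^ m * q ^ n ≤ 1 :=
    hgeo.tendsto_atTop_zero.eventually_le_const one_pos
  refine Summable.of_norm_bounded_eventually_nat (g := fun n => c n * R ^ n) h ?_
  filter_upwards [hev] with n hn
  have hxn : x ^ n = q ^ n * R ^ n := by
    rw [hq, div_pow, div_mul_cancel₀]
    exact pow_ne_zero _ hR.ne'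
  have h1 : 0 ≤ (n : ℝ) ^ m * c n * x ^ n :=
    mul_nonneg (mul_nonneg (pow_nonneg (Nat.cast_nonneg n) m) (hc n)) (pow_nonneg hx n)
  rw [Real.norm_eq_abs, abs_of_nonneg h1, hxn]
  have h2 : 0 ≤ c n * R ^ n := mul_nonneg (hc n) (pow_nonneg hR.le n)
  calc (n : ℝ) ^ m * c n * (q ^ n * R ^ n) = ((n : ℝ) ^ m * q ^ n) * (c n * R ^ n) := by ring
    _ ≤ 1 * (c n * R ^ n) := mul_le_mul_of_nonneg_right hn h2
    _ = c n * R ^ n := one_mul _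

private lemma aux_summable0 {c : ℕ → ℝ} (hc : ∀ n, 0 ≤ c n) {x R : ℝ}
    (hx : 0 ≤ x) (hxR : x < R) (h : Summable fun n : ℕ => c n * R ^ n) :
    Summable fun n : ℕ => c n * x ^ n := by
  have := aux_summable hc 0 hx hxR h
  simpa using this

private lemma aux_summable1 {c : ℕ → ℝ} (hc : ∀ n, 0 ≤ c n) {x R : ℝ}
    (hx : 0 ≤ x) (hxR : x < R) (h : Summable fun n : ℕ => c n * R ^ n) :
    Summable fun n : ℕ => (n : ℝ) * c n * x ^ n := by
  have := aux_summable hc 1 hx hxR h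
  simpa using this

private lemma aux_hasDerivAt {c : ℕ → ℝ} (hc : ∀ n, 0 ≤ c n) {r R φ : ℝ} (hr : 0 < r)
    (hrR : r < R) (h : Summable fun n : ℕ => c n * R ^ n) (hφ : |φ| < r) :
    HasDerivAt (fun x => ∑' n : ℕ, c n * x ^ n) (∑' n : ℕ, (n : ℝ) * c n * φ ^ (n - 1)) φ := by
  have hu : Summable fun n : ℕ => (n : ℝ) * c n * r ^ (n - 1) := by
    have h1 : Summable fun n : ℕ => ((n : ℝ) * c n * r ^ n) * r⁻¹ :=
      (aux_summable1 hc hr.le hrR h).mul_right _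
    refine h1.congr fun n => ?_
    cases n with
    | zero => simp
    | succ m =>
      simp only [Nat.add_sub_cancel, pow_succ]
      field_simp
  refine hasDerivAt_tsum_of_isPreconnected (F := ℝ) (u := fun n : ℕ => (n : ℝ) * c n * r ^ (n - 1))
    (g := fun (n : ℕ) (x : ℝ) => c n * x ^ n)
    (g' := fun (n : ℕ) (x : ℝ) => (n : ℝ) * c n * x ^ (n - 1))
    (t := Set.Ioo (-r) r) (y₀ := 0)
    hu isOpen_Ioo isPreconnected_Ioo (fun n y _ => ?_) (fun n y hy => ?_) ?_ ?_ ?_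
  · have := (hasDerivAt_pow n y).const_mul (c n)
    simpa [mul_comm, mul_assoc, mul_left_comm] using this
  · have hyr : |y| ≤ r := (abs_lt.2 ⟨hy.1, hy.2⟩).le
    have h1 : ‖(n : ℝ) * c n * y ^ (n - 1)‖ = (n : ℝ) * c n * |y| ^ (n - 1) := by
      rw [Real.norm_eq_abs, abs_mul, abs_mul, abs_pow, Nat.abs_cast, abs_of_nonneg (hc n)]
    rw [h1]
    have h2 : |y| ^ (n - 1) ≤ r ^ (n - 1) := pow_le_pow_left₀ (abs_nonneg y) hyr _
    have h3 : 0 ≤ (n : ℝ) * c n := mul_nonneg (Nat.cast_nonneg n) (hc n)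
    exact mul_le_mul_of_nonneg_left h2 h3
  · exact ⟨by linarith, hr⟩
  · refine summable_of_ne_finset_zero (s := {0}) fun n hn => ?_
    simp only [Finset.mem_singleton] at hn
    simp [zero_pow hn]
  · exact abs_lt.1 hφ

set_option maxHeartbeats 1000000 in
theorem stmt_5 (g : ℕ → ℝ) (φstar : ℝ)
    (hg : ∀ k : ℕ, 1 ≤ k → 0 < g k) (hφstar : 0 < φstar)
    (gfact : ℕ → ℝ)
    (hgfact : ∀ k, gfact k = ∏ i ∈ Finset.range k, g (i + 1))
    (Z : ℝ → ℝ) (hZ : ∀ φ, Z φ = ∑' k : ℕ, φ ^ k / gfact k)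
    (hsum : ∀ φ : ℝ, 0 < φ → φ < φstar → Summable (fun k : ℕ => φ ^ k / gfact k))
    (hrad : ∀ φ : ℝ, φstar < φ → ¬ Summable (fun k : ℕ => φ ^ k / gfact k))
    (M : ℝ → ℝ)
    (hM : ∀ φ, M φ = φ * deriv (fun ψ => Real.log (Z ψ)) φ) :
    StrictMonoOn M (Set.Ioo 0 φstar) ∧ ContinuousOn M (Set.Ioo 0 φstar) := by
  classical
  set c : ℕ → ℝ := fun n => (gfact n)⁻¹ with hcdef
  have hgf : ∀ n, 0 < gfact n := by
    intro n
    rw [hgfact]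
    exact Finset.prod_pos fun i _ => hg (i + 1) (Nat.succ_le_succ (Nat.zero_le i))
  have hc : ∀ n, 0 < c n := fun n => inv_pos.2 (hgf n)
  have hc' : ∀ n, 0 ≤ c n := fun n => (hc n).le
  have hterm : ∀ (φ : ℝ) (k : ℕ), φ ^ k / gfact k = c k * φ ^ k := by
    intro φ k; rw [div_eq_mul_inv, mul_comm]
  set D : ℝ → ℝ := fun x => ∑' n : ℕ, c n * x ^ n with hDdef
  set Nf : ℝ → ℝ := fun x => ∑' n : ℕ, (n : ℝ) * c n * x ^ n with hNdef
  have hZD : ∀ φ, Z φ = D φ := by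
    intro φ; rw [hZ]; exact tsum_congr fun k => hterm φ k
  have hsumc : ∀ ρ : ℝ, 0 < ρ → ρ < φstar → Summable fun n : ℕ => c n * ρ ^ n := by
    intro ρ h1 h2
    exact (hsum ρ h1 h2).congr fun n => hterm ρ n
  -- key facts at each point of the interval
  have hR : ∀ φ ∈ Set.Ioo (0:ℝ) φstar, ∃ R : ℝ, φ < R ∧ R < φstar ∧
      Summable fun n : ℕ => c n * R ^ n := by
    rintro φ ⟨h1, h2⟩
    refine ⟨(φ + φstar) / 2, by linarith, by linarith, hsumc _ (by linarith) (by linarith)⟩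
  have hDpos : ∀ φ ∈ Set.Ioo (0:ℝ) φstar, 0 < D φ := by
    rintro φ ⟨h1, h2⟩
    obtain ⟨R, hR1, hR2, hR3⟩ := hR φ ⟨h1, h2⟩
    refine Summable.tsum_pos (aux_summable0 hc' h1.le hR1 hR3)
      (fun n => mul_nonneg (hc' n) (pow_nonneg h1.le n)) 0 ?_
    simpa using hc 0
  have hMeq : ∀ φ ∈ Set.Ioo (0:ℝ) φstar, M φ = Nf φ / D φ := by
    rintro φ ⟨h1, h2⟩
    obtain ⟨R, hR1, hR2, hR3⟩ := hR φ ⟨h1, h2⟩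
    set r : ℝ := (φ + R) / 2 with hrdef
    have hr0 : 0 < r := by simp only [hrdef]; linarith
    have hrR : r < R := by simp only [hrdef]; linarith
    have hφr : |φ| < r := by rw [abs_of_pos h1]; simp only [hrdef]; linarith
    have hD : HasDerivAt D (∑' n : ℕ, (n : ℝ) * c n * φ ^ (n - 1)) φ :=
      aux_hasDerivAt hc' hr0 hrR hR3 hφr
    have hDφ : 0 < D φ := hDpos φ ⟨h1, h2⟩
    have hlog : HasDerivAt (fun ψ => Real.log (Z ψ))
        ((∑' n : ℕ, (n : ℝ) * c n * φ ^ (n - 1)) / D φ) φ := by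
      have heq : (fun ψ => Real.log (Z ψ)) = fun ψ => Real.log (D ψ) := by
        funext ψ; rw [hZD]
      rw [heq]
      exact hD.log hDφ.ne'
    have hfac : φ * ∑' n : ℕ, (n : ℝ) * c n * φ ^ (n - 1) = Nf φ := by
      rw [← tsum_mul_left]
      refine tsum_congr fun n => ?_
      cases n with
      | zero => simp
      | succ m =>
        simp only [Nat.add_sub_cancel, pow_succ]
        push_cast
        ring
    rw [hM, hlog.deriv, ← mul_div_assoc, hfac]
  -- continuity
  have hcontD : ∀ φ ∈ Set.Ioo (0:ℝ) φstar, ContinuousAt D φ := by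
    rintro φ ⟨h1, h2⟩
    obtain ⟨R, hR1, hR2, hR3⟩ := hR φ ⟨h1, h2⟩
    set r : ℝ := (φ + R) / 2 with hrdef
    have hr0 : 0 < r := by simp only [hrdef]; linarith
    have hrR : r < R := by simp only [hrdef]; linarith
    have hφr : |φ| < r := by rw [abs_of_pos h1]; simp only [hrdef]; linarith
    exact (aux_hasDerivAt hc' hr0 hrR hR3 hφr).continuousAt
  have hcontN : ∀ φ ∈ Set.Ioo (0:ℝ) φstar, ContinuousAt Nf φ := by
    rintro φ ⟨h1, h2⟩
    obtain ⟨R, hR1, hR2, hR3⟩ := hR φ ⟨h1, h2⟩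
    set r : ℝ := (φ + R) / 2 with hrdef
    have hr0 : 0 < r := by simp only [hrdef]; linarith
    have hrR : r < R := by simp only [hrdef]; linarith
    have hφr : |φ| < r := by rw [abs_of_pos h1]; simp only [hrdef]; linarith
    have hc2 : ∀ n : ℕ, 0 ≤ (n : ℝ) * c n := fun n => mul_nonneg (Nat.cast_nonneg n) (hc' n)
    obtain ⟨R2, hR21, hR22, hR23⟩ := hR R ⟨h1.trans hR1, hR2⟩
    have hs2 : Summable fun n : ℕ => ((n : ℝ) * c n) * R ^ n :=
      aux_summable1 hc' (h1.trans hR1).le hR21 hR23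
    exact (aux_hasDerivAt hc2 hr0 hrR hs2 hφr).continuousAt
  have hcont : ContinuousOn M (Set.Ioo 0 φstar) := by
    have : ContinuousOn (fun φ => Nf φ / D φ) (Set.Ioo 0 φstar) := by
      refine ContinuousOn.div ?_ ?_ fun φ hφ => (hDpos φ hφ).ne'
      · exact fun φ hφ => (hcontN φ hφ).continuousWithinAt
      · exact fun φ hφ => (hcontD φ hφ).continuousWithinAt
    exact this.congr hMeq
  refine ⟨?_, hcont⟩
  -- strict monotonicity
  intro x hx y hy hxy
  rw [hMeq x hx, hMeq y hy, div_lt_div_iff₀ (hDpos x hx) (hDpos y hy)]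
  obtain ⟨hx0, hx1⟩ := hx
  obtain ⟨hy0, hy1⟩ := hy
  set R : ℝ := (y + φstar) / 2 with hRdef
  have hyR : y < R := by simp only [hRdef]; linarith
  have hxR : x < R := hxy.trans hyR
  have hsR : Summable fun n : ℕ => c n * R ^ n :=
    hsumc R (by simp only [hRdef]; linarith) (by simp only [hRdef]; linarith)
  have Sx : Summable fun n : ℕ => c n * x ^ n := aux_summable0 hc' hx0.le hxR hsR
  have Sy : Summable fun n : ℕ => c n * y ^ n := aux_summable0 hc' hy0.le hyR hsR
  have SNx : Summable fun n : ℕ => (n : ℝ) * c n * x ^ n := aux_summable1 hc' hx0.le hxR hsR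
  have SNy : Summable fun n : ℕ => (n : ℝ) * c n * y ^ n := aux_summable1 hc' hy0.le hyR hsR
  have hnnx : ∀ n : ℕ, 0 ≤ c n * x ^ n := fun n => mul_nonneg (hc' n) (pow_nonneg hx0.le n)
  have hnny : ∀ n : ℕ, 0 ≤ c n * y ^ n := fun n => mul_nonneg (hc' n) (pow_nonneg hy0.le n)
  have hnnNx : ∀ n : ℕ, 0 ≤ (n : ℝ) * c n * x ^ n :=
    fun n => mul_nonneg (mul_nonneg (Nat.cast_nonneg n) (hc' n)) (pow_nonneg hx0.le n)
  have hnnNy : ∀ n : ℕ, 0 ≤ (n : ℝ) * c n * y ^ n :=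
    fun n => mul_nonneg (mul_nonneg (Nat.cast_nonneg n) (hc' n)) (pow_nonneg hy0.le n)
  set F : ℕ × ℕ → ℝ := fun p => ((p.1 : ℝ) * c p.1 * x ^ p.1) * (c p.2 * y ^ p.2) with hFdef
  set G : ℕ × ℕ → ℝ := fun p => ((p.1 : ℝ) * c p.1 * y ^ p.1) * (c p.2 * x ^ p.2) with hGdef
  have hF : Summable F := SNx.mul_of_nonneg Sy (fun n => hnnNx n) fun n => hnny n
  have hG : Summable G := SNy.mul_of_nonneg Sx (fun n => hnnNy n) fun n => hnnx n
  have hNxZy : Nf x * D y = ∑' p : ℕ × ℕ, F p := Summable.tsum_mul_tsum SNx Sy hF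
  have hNyZx : Nf y * D x = ∑' p : ℕ × ℕ, G p := Summable.tsum_mul_tsum SNy Sx hG
  have hGF : Summable fun p : ℕ × ℕ => G p - F p := hG.sub hF
  have hGFswap : Summable fun p : ℕ × ℕ => G p.swap - F p.swap :=
    ((Equiv.prodComm ℕ ℕ).summable_iff).2 hGF
  have hswap : (∑' p : ℕ × ℕ, (G p.swap - F p.swap)) = ∑' p : ℕ × ℕ, (G p - F p) :=
    (Equiv.prodComm ℕ ℕ).tsum_eq fun p => G p - F p
  have h2T : (2:ℝ) * ∑' p : ℕ × ℕ, (G p - F p)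
      = ∑' p : ℕ × ℕ, ((G p - F p) + (G p.swap - F p.swap)) := by
    rw [Summable.tsum_add hGF hGFswap, hswap, two_mul]
  have hpos : 0 < ∑' p : ℕ × ℕ, ((G p - F p) + (G p.swap - F p.swap)) := by
    refine Summable.tsum_pos (hGF.add hGFswap) ?_ (1, 0) ?_
    · rintro ⟨j, k⟩
      simp only [hFdef, hGdef, Prod.swap_prod_mk]
      have hs := aux_sign hx0.le hxy.le j k
      nlinarith [mul_nonneg (mul_nonneg (hc' j) (hc' k)) hs]
    · simp only [hFdef, hGdef, Prod.swap_prod_mk]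
      have h0 := hc 0
      have h1 := hc 1
      simp only [Nat.cast_one, Nat.cast_zero, pow_one, pow_zero, one_mul, zero_mul, mul_one]
      nlinarith [mul_pos (mul_pos h0 h1) (sub_pos.2 hxy)]
  have hT : 0 < ∑' p : ℕ × ℕ, (G p - F p) := by linarith
  have hsub : (∑' p : ℕ × ℕ, (G p - F p)) = (∑' p : ℕ × ℕ, G p) - ∑' p : ℕ × ℕ, F p :=
    Summable.tsum_sub hG hF
  rw [hNxZy, hNyZx]
  linarith [hsub ▸ hT]
end

section
/- Suppose there exist θ > 0 and a measurable ω : ℝ≥0 → ℝ≥0 with lim_{x→∞} ω(x)/x = ∞ such that ∫ exp(θ ω(η(0))) dν_φ < ∞ for the probability measure ν_φ{k} = φ^k/(Z(φ)g(k)!). Then the power series Z(ψ) = Σ_k ψ^k/g(k)! converges for every ψ > 0, i.e. Z has infinite radius of convergence. -/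
/-!
Since `ω` grows superlinearly, for every `ψ > 0` eventually `(ψ / φ) ^ k ≤ exp (θ ω k)`.
Hence `ψ ^ k / g(k)! = (ψ / φ) ^ k · Z(φ) ν_φ{k}` is eventually dominated by
`Z(φ) · exp (θ ω k) ν_φ{k}`, which is summable by the exponential moment hypothesis.
-/

open Filter Real

theorem eventually_pow_le_exp_mul {w : ℕ → ℝ} {θ r : ℝ} (hθ : 0 < θ) (hr : 0 < r)
    (hw : Tendsto (fun k : ℕ => w k / k) atTop atTop) :
    ∀ᶠ k : ℕ in atTop, r ^ k ≤ exp (θ * w k) := by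
  filter_upwards [hw.eventually_ge_atTop (log r / θ), eventually_gt_atTop 0] with k hk hk0
  have hlog : k * log r ≤ θ * w k := by
    have := (div_le_div_iff₀ hθ (Nat.cast_pos.mpr hk0)).mp hk
    linarith
  calc r ^ k = exp (k * log r) := by rw [exp_nat_mul, exp_log hr]
    _ ≤ exp (θ * w k) := exp_le_exp.mpr hlog

theorem summable_pow_mul_of_summable_exp_mul {w b : ℕ → ℝ} {θ r : ℝ} (hθ : 0 < θ) (hr : 0 < r)
    (hw : Tendsto (fun k : ℕ => w k / k) atTop atTop) (hb : ∀ k, 0 ≤ b k)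
    (hsum : Summable fun k => exp (θ * w k) * b k) :
    Summable fun k => r ^ k * b k := by
  refine hsum.of_norm_bounded_eventually ?_
  rw [Nat.cofinite_eq_atTop]
  filter_upwards [eventually_pow_le_exp_mul hθ hr hw] with k hk
  rw [Real.norm_of_nonneg (mul_nonneg (pow_nonneg hr.le k) (hb k))]
  exact mul_le_mul_of_nonneg_right hk (hb k)

theorem stmt_8_general (g : ℕ → ℝ) (φ θ : ℝ) (ω : ℝ → ℝ)
    (hg : ∀ k : ℕ, 1 ≤ k → 0 < g k) (hφ : 0 < φ) (hθ : 0 < θ)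
    (gfact : ℕ → ℝ)
    (hgfact : ∀ k, gfact k = ∏ i ∈ Finset.range k, g (i + 1))
    (hφsum : Summable (fun k : ℕ => φ ^ k / gfact k))
    (Z : ℝ → ℝ) (hZ : ∀ ψ, Z ψ = ∑' k : ℕ, ψ ^ k / gfact k)
    (ν : ℕ → ℝ) (hν : ∀ k, ν k = φ ^ k / (Z φ * gfact k))
    (hsuper : Filter.Tendsto (fun x => ω x / x) Filter.atTop Filter.atTop)
    (hmom : Summable (fun k : ℕ => Real.exp (θ * ω k) * ν k)) :
    ∀ ψ : ℝ, 0 < ψ → Summable (fun k : ℕ => ψ ^ k / gfact k) := by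
  intro ψ hψ
  have hgfact_pos : ∀ k, 0 < gfact k := fun k => by
    rw [hgfact]
    exact Finset.prod_pos fun i _ => hg (i + 1) (Nat.le_add_left 1 i)
  have hterm_nonneg : ∀ k, 0 ≤ φ ^ k / gfact k := fun k =>
    div_nonneg (pow_nonneg hφ.le k) (hgfact_pos k).le
  have hZφ : 0 < Z φ := by
    rw [hZ]
    exact hφsum.tsum_pos hterm_nonneg 0 (by simpa using hgfact_pos 0)
  have hmom' : Summable fun k : ℕ => exp (θ * ω k) * (φ ^ k / gfact k) := by
    refine (hmom.mul_left (Z φ)).congr fun k => ?_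
    rw [hν]
    field_simp
  refine (summable_pow_mul_of_summable_exp_mul hθ (div_pos hψ hφ)
    (hsuper.comp tendsto_natCast_atTop_atTop) hterm_nonneg hmom').congr fun k => ?_
  rw [div_pow]
  field_simp

theorem stmt_8 (g : ℕ → ℝ) (φ θ : ℝ) (ω : ℝ → ℝ)
    (hg : ∀ k : ℕ, 1 ≤ k → 0 < g k) (hφ : 0 < φ) (hθ : 0 < θ)
    (gfact : ℕ → ℝ)
    (hgfact : ∀ k, gfact k = ∏ i ∈ Finset.range k, g (i + 1))
    (hφsum : Summable (fun k : ℕ => φ ^ k / gfact k))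
    (Z : ℝ → ℝ) (hZ : ∀ ψ, Z ψ = ∑' k : ℕ, ψ ^ k / gfact k)
    (ν : ℕ → ℝ) (hν : ∀ k, ν k = φ ^ k / (Z φ * gfact k))
    (hωnonneg : ∀ x, 0 ≤ x → 0 ≤ ω x)
    (hsuper : Filter.Tendsto (fun x => ω x / x) Filter.atTop Filter.atTop)
    (hmom : Summable (fun k : ℕ => Real.exp (θ * ω k) * ν k)) :
    ∀ ψ : ℝ, 0 < ψ → Summable (fun k : ℕ => ψ ^ k / gfact k) :=
  stmt_8_general g φ θ ω hg hφ hθ gfact hgfact hφsum Z hZ ν hν hsuper hmom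
end

section
/- If g(k+1) − g(k) ≥ g₀* > 0 for all sufficiently large k (and g(k) > 0 for k ≥ 1), then for every θ > 0 sufficiently small and ω(x) = x log(1+x), the measure ν_φ{k} = φ^k/(Z(φ)g(k)!) satisfies Σ_k exp(θ ω(k)) ν_φ{k} < ∞ for every φ > 0. -/
theorem stmt_9 (g : ℕ → ℝ) (g₀ : ℝ) (K : ℕ)
    (h0 : g 0 = 0) (hg : ∀ k : ℕ, 1 ≤ k → 0 < g k)
    (hg₀ : 0 < g₀)
    (hgap : ∀ k : ℕ, K ≤ k → g₀ ≤ g (k + 1) - g k)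
    (gfact : ℕ → ℝ)
    (hgfact : ∀ k, gfact k = ∏ i ∈ Finset.range k, g (i + 1))
    (Z : ℝ → ℝ) (hZ : ∀ ψ, Z ψ = ∑' k : ℕ, ψ ^ k / gfact k) :
    ∃ θ₀ : ℝ, 0 < θ₀ ∧ ∀ θ : ℝ, 0 < θ → θ ≤ θ₀ → ∀ φ : ℝ, 0 < φ →
      Summable (fun k : ℕ =>
        Real.exp (θ * ((k : ℝ) * Real.log (1 + (k : ℝ)))) * (φ ^ k / (Z φ * gfact k))) := by
  refine ⟨1/2, by norm_num, ?_⟩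
  intro θ hθ hθ' φ hφ
  have hgf : ∀ k, (0:ℝ) < gfact k := by
    intro k
    rw [hgfact]
    exact Finset.prod_pos fun i _ => hg (i+1) (Nat.le_add_left 1 i)
  have hgK : ∀ m : ℕ, (m:ℝ) * g₀ ≤ g (K + m) := by
    intro m
    induction m with
    | zero =>
      simp only [Nat.cast_zero, zero_mul, Nat.add_zero]
      rcases Nat.eq_zero_or_pos K with h | h
      · simp [h, h0]
      · exact (hg K h).le
    | succ m ih =>
      have h1 := hgap (K + m) (Nat.le_add_right K m)
      have h2 : K + (m+1) = K + m + 1 := by omega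
      rw [h2]
      push_cast
      linarith
  set c : ℝ := 4 * Real.exp 2⁻¹ * φ / g₀ with hc
  have hcpos : 0 < c := by positivity
  have key : Summable (fun k : ℕ =>
      Real.exp (θ * ((k:ℝ) * Real.log (1 + (k:ℝ)))) * (φ ^ k / gfact k)) := by
    apply summable_of_ratio_norm_eventually_le (r := 1/2) (by norm_num)
    filter_upwards [Filter.eventually_ge_atTop (max (2*K) ⌈c^2⌉₊)] with n hn
    have hn1 : 2*K ≤ n := le_trans (le_max_left _ _) hn
    have hn1' : (2:ℝ) * K ≤ (n:ℝ) := by exact_mod_cast hn1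
    have hn2 : c^2 ≤ (n:ℝ) + 2 := by
      have h3 : (⌈c^2⌉₊ : ℝ) ≤ n := by exact_mod_cast le_trans (le_max_right _ _) hn
      have h4 := Nat.le_ceil (c^2)
      linarith
    have hgn1 : 0 < g (n+1) := hg _ (Nat.le_add_left 1 n)
    have hgfsucc : gfact (n+1) = gfact n * g (n+1) := by
      rw [hgfact, hgfact, Finset.prod_range_succ]
    set L1 : ℝ := Real.log ((n:ℝ)+1) with hL1
    set L2 : ℝ := Real.log ((n:ℝ)+2) with hL2
    set Δ : ℝ := ((n:ℝ)+1)*L2 - (n:ℝ)*L1 with hΔdef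
    have hL1nn : 0 ≤ L1 := Real.log_nonneg (by linarith [Nat.cast_nonneg (α := ℝ) n])
    have hL12 : L1 ≤ L2 := Real.log_le_log (by positivity) (by linarith)
    have hnn : (0:ℝ) ≤ (n:ℝ) := Nat.cast_nonneg n
    have hΔ1 : L2 - L1 ≤ 1/((n:ℝ)+1) := by
      have hpos : (0:ℝ) < ((n:ℝ)+2)/((n:ℝ)+1) := by positivity
      have h5 := Real.log_le_sub_one_of_pos hpos
      rw [Real.log_div (by positivity) (by positivity)] at h5
      have h6 : ((n:ℝ)+2)/((n:ℝ)+1) - 1 = 1/((n:ℝ)+1) := by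
        field_simp
        norm_num
      rw [h6] at h5
      exact h5
    have hΔle : Δ ≤ L2 + 1 := by
      have h7 : (n:ℝ) * (L2 - L1) ≤ (n:ℝ) * (1/((n:ℝ)+1)) :=
        mul_le_mul_of_nonneg_left hΔ1 hnn
      have h8 : (n:ℝ) * (1/((n:ℝ)+1)) ≤ 1 := by
        rw [mul_one_div, div_le_one (by positivity)]; linarith
      have : Δ = L2 + (n:ℝ) * (L2 - L1) := by rw [hΔdef]; ring
      linarith
    have hΔ0 : 0 ≤ Δ := by
      rw [hΔdef]
      nlinarith
    have hθΔ : θ * Δ ≤ 2⁻¹ * (L2 + 1) := by nlinarith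
    set s : ℝ := Real.sqrt ((n:ℝ)+2) with hs
    have hsnn : 0 ≤ s := Real.sqrt_nonneg _
    have hs2 : s * s = (n:ℝ)+2 := Real.mul_self_sqrt (by positivity)
    have hcs : c ≤ s := by
      rw [hs, show c = Real.sqrt (c^2) from (Real.sqrt_sq hcpos.le).symm]
      exact Real.sqrt_le_sqrt hn2
    have hexps : Real.exp (2⁻¹ * L2) = s := by
      rw [hs, Real.sqrt_eq_rpow, Real.rpow_def_of_pos (show (0:ℝ) < (n:ℝ)+2 by positivity)]
      congr 1
      rw [hL2]; ring
    have hexpΔ : Real.exp (θ * Δ) ≤ Real.exp 2⁻¹ * s := by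
      calc Real.exp (θ * Δ) ≤ Real.exp (2⁻¹ * (L2 + 1)) := Real.exp_le_exp.mpr hθΔ
        _ = Real.exp 2⁻¹ * Real.exp (2⁻¹ * L2) := by
            rw [← Real.exp_add]; congr 1; ring
        _ = Real.exp 2⁻¹ * s := by rw [hexps]
    have hm : ((n+1-K:ℕ):ℝ) * g₀ ≤ g (n+1) := by
      have h9 := hgK (n+1-K)
      rwa [show K + (n+1-K) = n+1 from by omega] at h9
    have hcast : ((n+1-K:ℕ):ℝ) = (n:ℝ)+1-(K:ℝ) := by
      have hK : K ≤ n+1 := by omega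
      push_cast [hK]
      ring
    rw [hcast] at hm
    have hcg : c * g₀ = 4 * Real.exp 2⁻¹ * φ := by
      rw [hc]; field_simp
    have hchain : 2 * Real.exp (θ * Δ) * φ ≤ g (n+1) := by
      have h10 : 2 * Real.exp (θ * Δ) * φ ≤ 2 * (Real.exp 2⁻¹ * s) * φ :=
        mul_le_mul_of_nonneg_right
          (mul_le_mul_of_nonneg_left hexpΔ (by norm_num)) hφ.le
      have h11 : 2 * (Real.exp 2⁻¹ * s) * φ = s * (c * g₀) / 2 := by
        rw [hcg]; ring
      have h12 : s * (c * g₀) / 2 ≤ s * (s * g₀) / 2 := by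
        gcongr
      have h13 : s * (s * g₀) / 2 = (((n:ℝ)+2)/2) * g₀ := by
        rw [show s * (s * g₀) = (s*s) * g₀ from by ring, hs2]; ring
      have h14 : (((n:ℝ)+2)/2) * g₀ ≤ ((n:ℝ)+1-(K:ℝ)) * g₀ := by
        apply mul_le_mul_of_nonneg_right _ hg₀.le
        linarith
      linarith
    have hstep : Real.exp (θ * Δ) * φ / g (n+1) ≤ 1/2 := by
      rw [div_le_iff₀ hgn1]
      linarith
    have hE2 : Real.exp (θ * (((n:ℝ)+1) * L2)) =
        Real.exp (θ * ((n:ℝ) * L1)) * Real.exp (θ * Δ) := by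
      rw [← Real.exp_add]; congr 1; rw [hΔdef]; ring
    have hP : (0:ℝ) < φ ^ n / gfact n := div_pos (pow_pos hφ n) (hgf n)
    have hval1 : (0:ℝ) < Real.exp (θ * ((n:ℝ) * Real.log (1 + (n:ℝ)))) * (φ ^ n / gfact n) :=
      mul_pos (Real.exp_pos _) hP
    have hval2 : (0:ℝ) < Real.exp (θ * (((n+1:ℕ):ℝ) * Real.log (1 + ((n+1:ℕ):ℝ)))) *
        (φ ^ (n+1) / gfact (n+1)) :=
      mul_pos (Real.exp_pos _) (div_pos (pow_pos hφ _) (hgf _))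
    rw [Real.norm_eq_abs, Real.norm_eq_abs, abs_of_pos hval2, abs_of_pos hval1]
    have hcast2 : ((n+1:ℕ):ℝ) = (n:ℝ)+1 := by push_cast; ring
    have hlog1 : Real.log (1 + (n:ℝ)) = L1 := by rw [hL1]; ring_nf
    have hlog2 : Real.log (1 + ((n:ℝ)+1)) = L2 := by rw [hL2]; ring_nf
    rw [hcast2, hlog2, hlog1]
    calc Real.exp (θ * (((n:ℝ)+1) * L2)) * (φ ^ (n+1) / gfact (n+1))
        = (Real.exp (θ * ((n:ℝ) * L1)) * (φ ^ n / gfact n)) *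
            (Real.exp (θ * Δ) * φ / g (n+1)) := by
          rw [hE2, hgfsucc, pow_succ]
          field_simp
      _ ≤ (Real.exp (θ * ((n:ℝ) * L1)) * (φ ^ n / gfact n)) * (1/2) :=
          mul_le_mul_of_nonneg_left hstep (by positivity)
      _ = 1/2 * (Real.exp (θ * ((n:ℝ) * L1)) * (φ ^ n / gfact n)) := by ring
  have key2 := key.mul_left (Z φ)⁻¹
  refine key2.congr fun k => ?_
  ring
end

section
/- Let η : ℤ → ℝ≥0 be finitely supported, l < εN integers with l, N ≥ 1, and η^l(x) the block average over a box of radius l. Then |η^{εN}(x) − η^l(x)| ≤ (2εN+1)^{-1} Σ_{2l+1 < |y| ≤ εN} |η^l(x) − η^l(x+y)| + C·(l/(εN)) · (2l+1)^{-1} Σ_{|z−x| ≤ εN + l} η(z) for some universal constant C > 0. -/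
/-!
Both averages are nonnegative, so it suffices to bound each of them by the right-hand side.
For `η^{εN}(x)` this is immediate, since its box lies inside the box of radius `εN + l`.
For `η^l(x)`, average the inequality `η^l(x) ≤ |η^l(x) - η^l(x+y)| + η^l(x+y)` over the
`2εN + 1` shifts `|y| ≤ εN`: the shifts with `|y| ≤ 2l + 1` are only `4l + 3` of them and are
bounded trivially, and by Fubini the shifted block averages `η^l(x+y)` have total mass at most
`Σ_{|z-x| ≤ εN+l} η(z)`.
-/

open Finset

noncomputable def blockAvg (η : ℤ → ℝ) (m : ℕ) (x : ℤ) : ℝ :=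
  (1 / (2 * (m : ℝ) + 1)) * ∑ y ∈ Icc (x - m) (x + m), η y

theorem sum_Icc_add_left_eq {M : Type*} [AddCommMonoid M] (f : ℤ → M) (c a b : ℤ) :
    ∑ z ∈ Icc (c + a) (c + b), f z = ∑ u ∈ Icc a b, f (c + u) := by
  rw [← map_add_left_Icc a b c, sum_map]
  rfl

theorem sum_Icc_le_sum_Icc_of_nonneg {η : ℤ → ℝ} (hη : ∀ z, 0 ≤ η z) {a b a' b' : ℤ}
    (ha : a' ≤ a) (hb : b ≤ b') :
    ∑ z ∈ Icc a b, η z ≤ ∑ z ∈ Icc a' b', η z :=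
  sum_le_sum_of_subset_of_nonneg (Icc_subset_Icc ha hb) fun z _ _ => hη z

theorem card_mul_le_sum_filter_abs_sub {ι : Type*} (s : Finset ι) (p : ι → Prop)
    [DecidablePred p] (a : ℝ) {f : ι → ℝ} (hf : ∀ y, 0 ≤ f y) :
    (#s : ℝ) * a ≤ ∑ y ∈ s with p y, |a - f y| + ∑ y ∈ s, f y + (#{y ∈ s | ¬p y} : ℝ) * a := by
  have hfar : ∑ y ∈ s with p y, a ≤ ∑ y ∈ s with p y, |a - f y| + ∑ y ∈ s, f y :=
    calc ∑ y ∈ s with p y, a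
        ≤ ∑ y ∈ s with p y, (|a - f y| + f y) :=
          sum_le_sum fun y _ => by linarith [le_abs_self (a - f y)]
      _ ≤ ∑ y ∈ s with p y, |a - f y| + ∑ y ∈ s, f y := by
          rw [sum_add_distrib]
          gcongr
          · exact fun y _ _ => hf y
          · exact filter_subset p s
  calc (#s : ℝ) * a = ∑ y ∈ s with p y, a + ∑ y ∈ s with ¬p y, a := by
        rw [sum_filter_add_sum_filter_not, sum_const, nsmul_eq_mul]
    _ = ∑ y ∈ s with p y, a + (#{y ∈ s | ¬p y} : ℝ) * a := by
        rw [sum_const (s := s.filter (¬p ·)), nsmul_eq_mul]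
    _ ≤ _ := by linarith

theorem one_div_two_mul_add_one_le {l n : ℕ} (hl : 1 ≤ l) (hn : 0 < n) :
    1 / (2 * (n : ℝ) + 1) ≤ 3 * ((l : ℝ) / n) * (1 / (2 * (l : ℝ) + 1)) := by
  have hl' : (1 : ℝ) ≤ l := by exact_mod_cast hl
  have hn' : (0 : ℝ) < n := by exact_mod_cast hn
  rw [show 3 * ((l : ℝ) / n) * (1 / (2 * l + 1)) = 3 * l / (n * (2 * l + 1)) by field_simp,
    div_le_div_iff₀ (by positivity) (by positivity)]
  nlinarith

namespace blockAvg

variable {η : ℤ → ℝ}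

theorem nonneg (hη : ∀ z, 0 ≤ η z) (m : ℕ) (x : ℤ) : 0 ≤ blockAvg η m x :=
  mul_nonneg (by positivity) (sum_nonneg fun z _ => hη z)

theorem mul_le_sum_Icc (hη : ∀ z, 0 ≤ η z) {m : ℕ} {x a b : ℤ} (ha : a ≤ x - m)
    (hb : x + m ≤ b) : (2 * (m : ℝ) + 1) * blockAvg η m x ≤ ∑ z ∈ Icc a b, η z := by
  rw [blockAvg, ← mul_assoc, mul_one_div_cancel (by positivity), one_mul]
  exact sum_Icc_le_sum_Icc_of_nonneg hη ha hb

theorem eq_sum_Icc_neg (m : ℕ) (x : ℤ) :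
    blockAvg η m x = (1 / (2 * (m : ℝ) + 1)) * ∑ u ∈ Icc (-(m : ℤ)) m, η (x + u) := by
  rw [blockAvg, sub_eq_add_neg, sum_Icc_add_left_eq]

theorem sum_shift_le (hη : ∀ z, 0 ≤ η z) (l n : ℕ) (x : ℤ) :
    ∑ y ∈ Icc (-(n : ℤ)) n, blockAvg η l (x + y) ≤
      ∑ z ∈ Icc (x - (n + l : ℕ)) (x + (n + l : ℕ)), η z := by
  set Ssum := ∑ z ∈ Icc (x - (n + l : ℕ)) (x + (n + l : ℕ)), η z
  have hwindow : ∀ u ∈ Icc (-(l : ℤ)) l, ∑ y ∈ Icc (-(n : ℤ)) n, η (x + y + u) ≤ Ssum := by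
    intro u hu
    rw [mem_Icc] at hu
    calc ∑ y ∈ Icc (-(n : ℤ)) n, η (x + y + u)
        = ∑ z ∈ Icc (x + u + -n) (x + u + n), η z := by
          rw [sum_Icc_add_left_eq]
          exact sum_congr rfl fun y _ => by ring_nf
      _ ≤ Ssum := sum_Icc_le_sum_Icc_of_nonneg hη (by push_cast; omega) (by push_cast; omega)
  have hcard : (#(Icc (-(l : ℤ)) l) : ℝ) = 2 * l + 1 := by
    rw [Int.card_Icc, show (l + 1 - -(l : ℤ)).toNat = 2 * l + 1 by omega]
    push_cast; ring
  calc ∑ y ∈ Icc (-(n : ℤ)) n, blockAvg η l (x + y)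
      = (1 / (2 * (l : ℝ) + 1)) * ∑ u ∈ Icc (-(l : ℤ)) l, ∑ y ∈ Icc (-(n : ℤ)) n,
          η (x + y + u) := by
        simp_rw [eq_sum_Icc_neg, ← mul_sum]
        rw [sum_comm]
    _ ≤ (1 / (2 * (l : ℝ) + 1)) * ∑ _u ∈ Icc (-(l : ℤ)) l, Ssum := by
        gcongr with u hu
        exact hwindow u hu
    _ = Ssum := by
        rw [sum_const, nsmul_eq_mul, hcard, ← mul_assoc, one_div_mul_cancel (by positivity),
          one_mul]

theorem le_of_far_shifts (hη : ∀ z, 0 ≤ η z) {l n : ℕ} (hn : 2 * l + 1 < n) (x : ℤ) :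
    blockAvg η l x ≤
      (1 / (2 * (n : ℝ) + 1)) *
          ∑ y ∈ (Icc (-(n : ℤ)) n).filter (fun y => 2 * (l : ℤ) + 1 < |y|),
            |blockAvg η l x - blockAvg η l (x + y)| +
        4 * (1 / (2 * (n : ℝ) + 1)) *
          ∑ z ∈ Icc (x - (n + l : ℕ)) (x + (n + l : ℕ)), η z := by
  set A := ∑ y ∈ (Icc (-(n : ℤ)) n).filter (fun y => 2 * (l : ℤ) + 1 < |y|),
    |blockAvg η l x - blockAvg η l (x + y)|
  set Ssum := ∑ z ∈ Icc (x - (n + l : ℕ)) (x + (n + l : ℕ)), η z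
  have hsplit := card_mul_le_sum_filter_abs_sub (Icc (-(n : ℤ)) n)
    (fun y => 2 * (l : ℤ) + 1 < |y|) (blockAvg η l x) (nonneg hη l <| x + ·)
  have hcard : (#(Icc (-(n : ℤ)) n) : ℝ) = 2 * n + 1 := by
    rw [Int.card_Icc, show (n + 1 - -(n : ℤ)).toNat = 2 * n + 1 by omega]
    push_cast; ring
  have hnear : {y ∈ Icc (-(n : ℤ)) n | ¬2 * (l : ℤ) + 1 < |y|} =
      Icc (-(2 * (l : ℤ) + 1)) (2 * l + 1) := by
    ext y
    simp only [mem_filter, mem_Icc, not_lt, abs_le]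
    omega
  have hnear_card : (#{y ∈ Icc (-(n : ℤ)) n | ¬2 * (l : ℤ) + 1 < |y|} : ℝ) = 4 * l + 3 := by
    rw [hnear, Int.card_Icc, show (2 * l + 1 + 1 - -(2 * (l : ℤ) + 1)).toNat = 4 * l + 3 by omega]
    push_cast; ring
  have hself : (2 * (l : ℝ) + 1) * blockAvg η l x ≤ Ssum :=
    mul_le_sum_Icc hη (by push_cast; omega) (by push_cast; omega)
  rw [hcard, hnear_card] at hsplit
  have hnonneg := nonneg hη l x
  have hmain : (2 * (n : ℝ) + 1) * blockAvg η l x ≤ A + 4 * Ssum := by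
    nlinarith [sum_shift_le hη l n x]
  calc blockAvg η l x = 1 / (2 * (n : ℝ) + 1) * ((2 * n + 1) * blockAvg η l x) := by field_simp
    _ ≤ 1 / (2 * (n : ℝ) + 1) * (A + 4 * Ssum) := by gcongr
    _ = _ := by ring

end blockAvg

theorem stmt_15 :
    ∃ C : ℝ, 0 < C ∧
      ∀ (η : ℤ → ℝ), (∀ z, 0 ≤ η z) → (Function.support η).Finite →
      ∀ (l n : ℕ), 1 ≤ l → 2 * l + 1 < n →
      ∀ (ηavg : ℕ → ℤ → ℝ),
        (∀ (m : ℕ) (x : ℤ),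
          ηavg m x = (1 / (2 * (m : ℝ) + 1)) * ∑ y ∈ Finset.Icc (x - m) (x + m), η y) →
      ∀ x : ℤ,
        |ηavg n x - ηavg l x| ≤
          (1 / (2 * (n : ℝ) + 1)) *
            ∑ y ∈ (Finset.Icc (-(n : ℤ)) n).filter (fun y => 2 * (l : ℤ) + 1 < |y|),
              |ηavg l x - ηavg l (x + y)| +
          C * ((l : ℝ) / n) * ((1 / (2 * (l : ℝ) + 1)) *
            ∑ z ∈ Finset.Icc (x - (n + l : ℕ)) (x + (n + l : ℕ)), η z) := by
  refine ⟨12, by norm_num, fun η hη _ l n hl hn ηavg havg x => ?_⟩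
  obtain rfl : ηavg = blockAvg η := funext₂ havg
  set A := ∑ y ∈ (Icc (-(n : ℤ)) n).filter (fun y => 2 * (l : ℤ) + 1 < |y|),
    |blockAvg η l x - blockAvg η l (x + y)|
  set Ssum := ∑ z ∈ Icc (x - (n + l : ℕ)) (x + (n + l : ℕ)), η z
  have hA : 0 ≤ 1 / (2 * (n : ℝ) + 1) * A := by positivity
  have hSsum : 0 ≤ Ssum := sum_nonneg fun z _ => hη z
  have hratio := mul_le_mul_of_nonneg_right (one_div_two_mul_add_one_le (n := n) hl (by omega))
    hSsum
  have hT : 0 ≤ (l : ℝ) / n * (1 / (2 * (l : ℝ) + 1) * Ssum) := by positivity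
  have hbig : blockAvg η n x ≤ 1 / (2 * (n : ℝ) + 1) * Ssum :=
    mul_le_mul_of_nonneg_left
      (sum_Icc_le_sum_Icc_of_nonneg hη (by push_cast; omega) (by push_cast; omega)) (by positivity)
  have hsmall := blockAvg.le_of_far_shifts hη hn x
  refine abs_sub_le_of_nonneg_of_le (blockAvg.nonneg hη n x) ?_ (blockAvg.nonneg hη l x) ?_
  · linarith
  · linarith
end
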